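/- arXiv:2405.01283 — 2 statements merged into one kernel-verified Lean document; each statement's English description precedes it below -/
import Mathlib

section
/- Let (X,d,μ) be a space of homogeneous type and let K be an ω-Calderón–Zygmund kernel on X satisfying the dual non-degeneracy condition with constants c₀, C̄. Then for each A ≥ 2A₀² + A₀ there exists ε_A > 0, with ε_A → 0 as A → ∞, such that for every ball B = B(y₀,r) there exists a ball B̃ = B(x₀,r) with: d(B,B̃) ≥ r; Ar ≤ d(x₀,y₀) < C̄Ar; |K(x₀,y₀)| ≈ 1/μ(B(y₀,Ar)) up to constants depending only on c₀, c_K, C_μ, A₀; ∫_B |K(x,y) − K(x₀,y₀)| dμ(y) ≲_{C_μ,A₀} ε_A μ(B)/μ(B(y₀,Ar)) for all x ∈ B̃; and ∫_{B̃} |K(x,y) − K(x₀,y₀)| dμ(x) ≲_{C_μ,A₀} ε_A μ(B̃)/μ(B(y₀,Ar)) for all y ∈ B. -/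
open MeasureTheory Filter Set
open scoped ENNReal NNReal

noncomputable section

namespace SHT

variable {X : Type*}

/-- The quasi-metric ball `B(x,r)`. -/
def qball (d : X → X → ℝ) (x : X) (r : ℝ) : Set X := {y | d x y < r}

/-- Open sets for the topology induced by a quasi-metric. -/
def dOpen (d : X → X → ℝ) (U : Set X) : Prop := ∀ x ∈ U, ∃ r > 0, qball d x r ⊆ U

/-- Closure of a set in the topology induced by a quasi-metric. -/
def dClosure (d : X → X → ℝ) (A : Set X) : Set X :=
  {x | ∀ U : Set X, dOpen d U → x ∈ U → (U ∩ A).Nonempty}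

/-- Support of a function: the closure of its non-vanishing set. -/
def qsupp (d : X → X → ℝ) (f : X → ℂ) : Set X := dClosure d {y | f y ≠ 0}

/-- `(X, d, μ)` is a space of homogeneous type with quasi-metric constant `A₀`
and doubling constant `Cμ`. -/
structure IsSHT [MeasurableSpace X] (d : X → X → ℝ) (μ : Measure X) (A₀ Cμ : ℝ) : Prop where
  one_le_A0 : 1 ≤ A₀
  symm : ∀ x y, d x y = d y x
  nonneg : ∀ x y, 0 ≤ d x y
  eq_zero_iff : ∀ x y, d x y = 0 ↔ x = y
  triangle : ∀ x y z, d x y ≤ A₀ * (d x z + d z y)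
  meas_ball : ∀ (x : X) (r : ℝ), MeasurableSet (qball d x r)
  ball_pos : ∀ (x : X) (r : ℝ), 0 < r → 0 < μ (qball d x r)
  ball_ne_top : ∀ (x : X) (r : ℝ), μ (qball d x r) < ∞
  one_le_Cmu : 1 ≤ Cμ
  doubling : ∀ (x : X) (r : ℝ), 0 < r →
    μ (qball d x (2 * r)) ≤ ENNReal.ofReal Cμ * μ (qball d x r)
  measure_univ : μ Set.univ = ∞
  null_singleton : ∀ x : X, μ {x} = 0

/-- An `ω`-Calderón–Zygmund kernel with size constant `cK`. -/
structure IsCZKernel [MeasurableSpace X] (d : X → X → ℝ) (μ : Measure X) (A₀ : ℝ)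
    (K : X → X → ℂ) (cK : ℝ) (ω : ℝ → ℝ) : Prop where
  size : ∀ x y, x ≠ y →
    ‖K x y‖ ≤ cK / (μ (qball d x (d x y))).toReal
  regularity : ∀ x x' y, x ≠ y → d x x' < (2 * A₀)⁻¹ * d x y →
    ‖K x y - K x' y‖ + ‖K y x - K y x'‖
      ≤ ω (d x x' / d x y) / (μ (qball d x (d x y))).toReal
  omega_cont : ContinuousOn ω (Set.Icc 0 1)
  omega_mono : MonotoneOn ω (Set.Icc 0 1)
  omega_nonneg : ∀ t ∈ Set.Icc (0:ℝ) 1, 0 ≤ ω t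
  omega_subadd : ∀ s t : ℝ, 0 ≤ s → 0 ≤ t → s + t ≤ 1 → ω (s + t) ≤ ω s + ω t
  omega_zero : ω 0 = 0

/-- The Dini condition `∫₀¹ ω(t) dt/t < ∞`. -/
def DiniCondition (ω : ℝ → ℝ) : Prop :=
  MeasureTheory.IntegrableOn (fun t => ω t / t) (Set.Ioo (0:ℝ) 1) MeasureTheory.volume

/-- Non-degeneracy of the kernel: for every `x` and `r > 0` there is
`y ∈ B(x, C̄ r) \ B(x,r)` with `|K(x,y)| ≥ 1/(c₀ μ(B(x,r)))`. -/
def NonDeg [MeasurableSpace X] (d : X → X → ℝ) (μ : Measure X) (K : X → X → ℂ)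
    (c₀ Cb : ℝ) : Prop :=
  ∀ (x : X) (r : ℝ), 0 < r → ∃ y ∈ qball d x (Cb * r) \ qball d x r,
    1 / (c₀ * (μ (qball d x r)).toReal) ≤ ‖K x y‖

/-- Dual non-degeneracy of the kernel: for every `y` and `r > 0` there is
`x ∈ B(y, C̄ r) \ B(y,r)` with `|K(x,y)| ≥ 1/(c₀ μ(B(y,r)))`. -/
def NonDegDual [MeasurableSpace X] (d : X → X → ℝ) (μ : Measure X) (K : X → X → ℂ)
    (c₀ Cb : ℝ) : Prop :=
  ∀ (y : X) (r : ℝ), 0 < r → ∃ x ∈ qball d y (Cb * r) \ qball d y r,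
    1 / (c₀ * (μ (qball d y r)).toReal) ≤ ‖K x y‖

/-- `w(E) = ∫_E w dμ`. -/
def wInt [MeasurableSpace X] (μ : Measure X) (w : X → ℝ) (E : Set X) : ℝ := ∫ x in E, w x ∂μ

/-- `w` is a positive, locally (on balls) integrable weight. -/
def IsWeight [MeasurableSpace X] (d : X → X → ℝ) (μ : Measure X) (w : X → ℝ) : Prop :=
  Measurable w ∧ (∀ x, 0 < w x) ∧
    ∀ (x : X) (r : ℝ), 0 < r → IntegrableOn w (qball d x r) μ

/-- `C` is an upper bound for the Muckenhoupt `A_p` characteristic `[w]_{A_p}`. -/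
def IsApBound [MeasurableSpace X] (d : X → X → ℝ) (μ : Measure X) (p : ℝ) (w : X → ℝ)
    (C : ℝ) : Prop :=
  ∀ (x : X) (r : ℝ), 0 < r →
    (∫ z in qball d x r, w z ∂μ) *
      (∫ z in qball d x r, (w z) ^ (-(1 / (p - 1))) ∂μ) ^ (p - 1)
      ≤ C * ((μ (qball d x r)).toReal) ^ p

/-- Conjugate exponent `p' = p/(p-1)`. -/
def conjExp (p : ℝ) : ℝ := p / (p - 1)

/-- Average `⟨b⟩_E` of a (complex-valued) function over a set. -/
def cavg [MeasurableSpace X] (μ : Measure X) (b : X → ℂ) (E : Set X) : ℂ :=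
  ((μ E).toReal)⁻¹ • ∫ x in E, b x ∂μ

/-- Oscillation `∫_E |b - ⟨b⟩_E| dμ`. -/
def osc [MeasurableSpace X] (μ : Measure X) (b : X → ℂ) (E : Set X) : ℝ :=
  ∫ x in E, ‖b x - cavg μ b E‖ ∂μ

/-- `N` is an upper bound for the weighted fractional BMO norm `‖b‖_{BMO_w^α}`,
where `Qd` is the upper dimension of the measure. -/
def BMOBound [MeasurableSpace X] (d : X → X → ℝ) (μ : Measure X) (w : X → ℝ)
    (Qd α : ℝ) (b : X → ℂ) (N : ℝ) : Prop :=
  ∀ (x : X) (r : ℝ), 0 < r →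
    osc μ b (qball d x r)
      ≤ N * (wInt μ w (qball d x r)) ^ (α / Qd) * wInt μ w (qball d x r)

/-- Local integrability (integrability on all balls). -/
def LocInt [MeasurableSpace X] (d : X → X → ℝ) (μ : Measure X) (b : X → ℂ) : Prop :=
  Measurable b ∧ ∀ (x : X) (r : ℝ), 0 < r → IntegrableOn b (qball d x r) μ

/-- Bounded function. -/
def BddFun (f : X → ℂ) : Prop := ∃ M : ℝ, ∀ x, ‖f x‖ ≤ M

/-- Boundedly supported function. -/
def BddSupp (d : X → X → ℝ) (f : X → ℂ) : Prop :=
  ∃ (x : X) (r : ℝ), ∀ y, f y ≠ 0 → d x y < r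

/-- `L^∞_bs(X)`: bounded functions with bounded support. -/
def Linftybs (d : X → X → ℝ) : Set (X → ℂ) := {f | BddFun f ∧ BddSupp d f}

/-- `L¹_bs(X)`: integrable functions with bounded support. -/
def L1bs [MeasurableSpace X] (d : X → X → ℝ) (μ : Measure X) : Set (X → ℂ) :=
  {f | Integrable f μ ∧ BddSupp d f}

/-- `L^∞(E)`: bounded functions vanishing outside `E`. -/
def MemLinfty (f : X → ℂ) (E : Set X) : Prop := BddFun f ∧ ∀ x ∉ E, f x = 0

/-- `L^∞₀(E)`: bounded integrable functions vanishing outside `E` with mean zero. -/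
def MemLinfty0 [MeasurableSpace X] (μ : Measure X) (f : X → ℂ) (E : Set X) : Prop :=
  MemLinfty f E ∧ Integrable f μ ∧ (∫ x, f x ∂μ) = 0

/-- Supremum norm of a complex-valued function. -/
def supNorm (f : X → ℂ) : ℝ := ⨆ x, ‖f x‖

/-- Supremum norm of a real-valued function. -/
def supNormR (g : X → ℝ) : ℝ := ⨆ x, |g x|

/-- `T ∈ SIO(K, 𝓕)`: on `𝓕`, `T` is represented by the kernel `K` off the support. -/
def SIO [MeasurableSpace X] (d : X → X → ℝ) (μ : Measure X) (K : X → X → ℂ)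
    (F : Set (X → ℂ)) (T : (X → ℂ) → X → ℂ) : Prop :=
  ∀ f ∈ F, ∀ x ∉ qsupp d f, T f x = ∫ y, K x y * f y ∂μ

/-- A Calderón–Zygmund operator: bounded on `L²` and represented by the kernel off
the support (for `f` in `L²` or in `L¹`). -/
structure IsCZO [MeasurableSpace X] (d : X → X → ℝ) (μ : Measure X) (K : X → X → ℂ)
    (T : (X → ℂ) → X → ℂ) : Prop where
  bddL2 : ∃ M : ℝ≥0∞, ∀ f : X → ℂ, MemLp f 2 μ →
    MemLp (T f) 2 μ ∧ eLpNorm (T f) 2 μ ≤ M * eLpNorm f 2 μ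
  repr : ∀ f : X → ℂ, (MemLp f 2 μ ∨ Integrable f μ) →
    ∀ x ∉ qsupp d f, T f x = ∫ y, K x y * f y ∂μ

/-- The commutator `[b,T]f = b · Tf − T(bf)`. -/
def commut (b : X → ℂ) (T : (X → ℂ) → X → ℂ) (f : X → ℂ) : X → ℂ :=
  fun x => b x * T f x - T (fun y => b y * f y) x

/-- Weighted `L^p` norm `‖f‖_{L^p_w} = (∫ |f w|^p dμ)^{1/p}` (valued in `ℝ≥0∞`). -/
def wLpNorm [MeasurableSpace X] (μ : Measure X) (p : ℝ) (w : X → ℝ) (f : X → ℂ) : ℝ≥0∞ :=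
  (∫⁻ x, ENNReal.ofReal (‖f x‖ * w x) ^ p ∂μ) ^ (1 / p)

/-- Weighted `L^q` norm of an `ℝ≥0∞`-valued function. -/
def wLqNormE [MeasurableSpace X] (μ : Measure X) (q : ℝ) (w : X → ℝ) (g : X → ℝ≥0∞) : ℝ≥0∞ :=
  (∫⁻ x, (g x * ENNReal.ofReal (w x)) ^ q ∂μ) ^ (1 / q)

/-- A system of dyadic cubes on `X`. -/
structure DyadicSystem [MeasurableSpace X] (d : X → X → ℝ) where
  δ : ℝ
  a1 : ℝ
  A1 : ℝ
  δ_pos : 0 < δ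
  δ_lt_one : δ < 1
  a1_pos : 0 < a1
  a1_le_A1 : a1 ≤ A1
  cubes : ℤ → Set (Set X)
  countable : ∀ k, (cubes k).Countable
  meas : ∀ k, ∀ Q ∈ cubes k, MeasurableSet Q
  cover : ∀ k, ⋃₀ cubes k = Set.univ
  pdisj : ∀ k, (cubes k).PairwiseDisjoint id
  nested : ∀ k l : ℤ, k ≤ l → ∀ Q ∈ cubes k, ∀ R ∈ cubes l, R ⊆ Q ∨ Disjoint Q R
  center : ∀ k : ℤ, ∀ Q ∈ cubes k, ∃ x : X,
    qball d x (a1 * δ ^ k) ⊆ Q ∧ Q ⊆ qball d x (A1 * δ ^ k)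

/-- An `η`-sparse family of dyadic cubes. -/
structure SparseFamily [MeasurableSpace X] (d : X → X → ℝ) (μ : Measure X)
    (D : DyadicSystem d) (η : ℝ) where
  S : Set (Set X)
  mem_dyadic : ∀ Q ∈ S, ∃ k, Q ∈ D.cubes k
  E : Set X → Set X
  E_sub : ∀ Q ∈ S, E Q ⊆ Q
  E_meas : ∀ Q ∈ S, MeasurableSet (E Q)
  E_dense : ∀ Q ∈ S, ENNReal.ofReal η * μ Q ≤ μ (E Q)
  overlap : ∃ N : ℕ, ∀ x : X, ∀ F : Finset (Set X),
    (↑F : Set (Set X)) ⊆ S → (∀ Q ∈ F, x ∈ E Q) → F.card ≤ N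

/-- Average of `|f|` over `P` (valued in `ℝ≥0∞`). -/
def avgAbs [MeasurableSpace X] (μ : Measure X) (f : X → ℂ) (P : Set X) : ℝ≥0∞ :=
  (∫⁻ x in P, ENNReal.ofReal (‖f x‖) ∂μ) / μ P

/-- The coefficient `l₁^p(P)^{1/p} l₂^{-q'}(P)^{1/q'} / μ(P)` of the two-weight
fractional sparse operator. -/
def sparseCoef [MeasurableSpace X] (μ : Measure X) (p q : ℝ) (l₁ l₂ : X → ℝ)
    (P : Set X) : ℝ≥0∞ :=
  (∫⁻ x in P, ENNReal.ofReal ((l₁ x) ^ p) ∂μ) ^ (1 / p)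
    * (∫⁻ x in P, ENNReal.ofReal ((l₂ x) ^ (-(conjExp q))) ∂μ) ^ (1 / conjExp q) / μ P

/-- The two-weight fractional sparse operator `𝒜^{p,q}_{l₁,l₂}(f;𝒮)`. -/
def sparseOp [MeasurableSpace X] (μ : Measure X) (p q : ℝ) (l₁ l₂ : X → ℝ)
    (S : Set (Set X)) (f : X → ℂ) (x : X) : ℝ≥0∞ :=
  ∑' P : S, Set.indicator (P : Set X)
    (fun _ => sparseCoef μ p q l₁ l₂ (P : Set X) * avgAbs μ f (P : Set X)) x

/-- The sparse operator `𝒜_{b,𝒮} f(x) = Σ_{Q∈𝒮} |b(x) − ⟨b⟩_Q| ⟨|f|⟩_Q χ_Q(x)`. -/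
def Asparse [MeasurableSpace X] (μ : Measure X) (b : X → ℂ) (S : Set (Set X))
    (f : X → ℂ) (x : X) : ℝ≥0∞ :=
  ∑' P : S, Set.indicator (P : Set X)
    (fun z => ENNReal.ofReal (‖b z - cavg μ b (P : Set X)‖)
      * avgAbs μ f (P : Set X)) x

/-- The sparse operator `𝒜*_{b,𝒮} f(x) = Σ_{Q∈𝒮} ⟨|b − ⟨b⟩_Q| |f|⟩_Q χ_Q(x)`. -/
def AsparseStar [MeasurableSpace X] (μ : Measure X) (b : X → ℂ) (S : Set (Set X))
    (f : X → ℂ) (x : X) : ℝ≥0∞ :=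
  ∑' P : S, Set.indicator (P : Set X)
    (fun _ => (∫⁻ z in (P : Set X),
        ENNReal.ofReal (‖b z - cavg μ b (P : Set X)‖ * ‖f z‖) ∂μ)
      / μ (P : Set X)) x

/-- An admissible sextuple `(K, ξ, A, ε, B, B̃)` with `B = B(y₀,r)`, `B̃ = B(x₀,r)`. -/
structure Admissible [MeasurableSpace X] (d : X → X → ℝ) (μ : Measure X) (A₀ : ℝ)
    (K : X → X → ℂ) (ξ A ε r : ℝ) (y₀ x₀ : X) : Prop where
  r_pos : 0 < r
  xi_ge_one : 1 ≤ ξ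
  A_ge : 2 * A₀ ^ 2 + A₀ ≤ A
  eps_pos : 0 < ε
  sep : ∀ y ∈ qball d y₀ r, ∀ x ∈ qball d x₀ r, r ≤ d y x
  dist_lb : A * r ≤ d x₀ y₀
  dist_ub : d x₀ y₀ ≤ ξ * A * r
  K_ub : ‖K x₀ y₀‖ ≤ ξ / (μ (qball d y₀ (A * r))).toReal
  K_lb : 1 / (μ (qball d y₀ (A * r))).toReal ≤ ξ * ‖K x₀ y₀‖
  int_y : ∀ x ∈ qball d x₀ r,
    ∫⁻ y in qball d y₀ r, ENNReal.ofReal (‖K x y - K x₀ y₀‖) ∂μ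
      ≤ ENNReal.ofReal (ξ * ε) * μ (qball d y₀ r) / μ (qball d y₀ (A * r))
  int_x : ∀ y ∈ qball d y₀ r,
    ∫⁻ x in qball d x₀ r, ENNReal.ofReal (‖K x y - K x₀ y₀‖) ∂μ
      ≤ ENNReal.ofReal (ξ * ε) * μ (qball d x₀ r) / μ (qball d y₀ (A * r))

/-!
Take `x₀` from the dual non-degeneracy condition at radius `A r`, so that `d(x₀,y₀)` lies
between `A r` and `C̄ A r`. Separation and the lower bound on `|K(x₀,y₀)|` are then immediate,
and iterated doubling compares `μ(B(y₀,Ar))` with any ball around `x₀` of radius at least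
`Ar/(2A₀)`, at the cost of `C_μ^N` where `2^N ≥ 2A₀²(C̄+1)`; this gives the upper bound.
For `x ∈ B̃`, `y ∈ B` split `K(x,y) − K(x₀,y₀)` through `K(x₀,y)`: both pieces are
controlled by the smoothness of `K` at relative scale `A₀/(A−A₀)`, so the oscillation is at most
a constant times `ω(A₀/(A−A₀))/μ(B(y₀,Ar))` pointwise, and integrating gives both integral bounds.
The term `1/A` in `ε_A = ω(A₀/(A−A₀)) + 1/A` only serves to make `ε_A` positive.
-/

section Measure

variable {X : Type*} [MeasurableSpace X] {μ : Measure X}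

theorem setLIntegral_ofReal_le_mul_div_measure {s E : Set X} {f : X → ℝ} {c : ℝ}
    (hE₀ : μ E ≠ 0) (hE : μ E ≠ ∞) (hf : ∀ y ∈ s, f y ≤ c / (μ E).toReal) :
    ∫⁻ y in s, ENNReal.ofReal (f y) ∂μ ≤ ENNReal.ofReal c * μ s / μ E :=
  calc ∫⁻ y in s, ENNReal.ofReal (f y) ∂μ
      ≤ ∫⁻ _ in s, ENNReal.ofReal (c / (μ E).toReal) ∂μ :=
        setLIntegral_mono measurable_const fun y hy => ENNReal.ofReal_le_ofReal (hf y hy)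
    _ = ENNReal.ofReal c * μ s / μ E := by
        rw [setLIntegral_const, ENNReal.ofReal_div_of_pos (ENNReal.toReal_pos hE₀ hE),
          ENNReal.ofReal_toReal hE, div_eq_mul_inv, div_eq_mul_inv, mul_right_comm]

end Measure

theorem div_sub_le_inv_two_mul {A₀ A : ℝ} (hA₀ : 0 < A₀) (hA : 2 * A₀ ^ 2 + A₀ ≤ A) :
    A₀ / (A - A₀) ≤ (2 * A₀)⁻¹ := by
  rw [div_le_iff₀ (by nlinarith)]
  field_simp
  linarith

theorem tendsto_comp_div_sub_atTop {ω : ℝ → ℝ} {a : ℝ} (ha : 0 ≤ a)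
    (hω : ContinuousWithinAt ω (Icc 0 1) 0) (hω₀ : ω 0 = 0) :
    Tendsto (fun A => ω (a / (A - a))) atTop (nhds 0) := by
  have hlim : Tendsto (fun A : ℝ => a / (A - a)) atTop (nhds 0) :=
    tendsto_const_nhds.div_atTop (tendsto_atTop_add_const_right _ (-a) tendsto_id)
  have hmem : ∀ᶠ A in atTop, a / (A - a) ∈ Icc (0 : ℝ) 1 := by
    filter_upwards [eventually_ge_atTop (2 * a + 1)] with A hA
    exact ⟨div_nonneg ha (by linarith), (div_le_one (by linarith)).2 (by linarith)⟩
  rw [← hω₀]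
  exact hω.tendsto.comp (tendsto_nhdsWithin_iff.2 ⟨hlim, hmem⟩)

section HomogeneousType

variable {X : Type*} [MeasurableSpace X] {d : X → X → ℝ} {μ : Measure X} {A₀ Cμ : ℝ}

theorem IsSHT.ne_of_dist_pos (hX : IsSHT d μ A₀ Cμ) {x y : X} (h : 0 < d x y) : x ≠ y := by
  rintro rfl
  exact h.ne' ((hX.eq_zero_iff x x).2 rfl)

theorem IsSHT.measure_qball_toReal_pos (hX : IsSHT d μ A₀ Cμ) (x : X) {r : ℝ} (hr : 0 < r) :
    0 < (μ (qball d x r)).toReal :=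
  ENNReal.toReal_pos (hX.ball_pos x r hr).ne' (hX.ball_ne_top x r).ne

theorem IsSHT.qball_subset_qball (hX : IsSHT d μ A₀ Cμ) {x y : X} {s t : ℝ}
    (h : A₀ * (d x y + s) ≤ t) : qball d y s ⊆ qball d x t := fun z (hz : d y z < s) =>
  calc d x z ≤ A₀ * (d x y + d y z) := hX.triangle x z y
    _ < A₀ * (d x y + s) := mul_lt_mul_of_pos_left (by linarith) (by linarith [hX.one_le_A0])
    _ ≤ t := h

theorem IsSHT.measure_qball_two_pow_mul_le (hX : IsSHT d μ A₀ Cμ) (x : X) {t : ℝ} (ht : 0 < t)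
    (n : ℕ) : μ (qball d x (2 ^ n * t)) ≤ ENNReal.ofReal Cμ ^ n * μ (qball d x t) := by
  induction n with
  | zero => simp
  | succ n ih =>
    calc μ (qball d x (2 ^ (n + 1) * t)) = μ (qball d x (2 * (2 ^ n * t))) := by
          rw [pow_succ', mul_assoc]
      _ ≤ ENNReal.ofReal Cμ * μ (qball d x (2 ^ n * t)) := hX.doubling x _ (by positivity)
      _ ≤ ENNReal.ofReal Cμ * (ENNReal.ofReal Cμ ^ n * μ (qball d x t)) := by gcongr
      _ = ENNReal.ofReal Cμ ^ (n + 1) * μ (qball d x t) := by rw [pow_succ', mul_assoc]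

theorem IsSHT.measure_qball_toReal_le_pow (hX : IsSHT d μ A₀ Cμ) {x y : X} {s t : ℝ} {n : ℕ}
    (ht : 0 < t) (h : A₀ * (d x y + s) ≤ 2 ^ n * t) :
    (μ (qball d y s)).toReal ≤ Cμ ^ n * (μ (qball d x t)).toReal := by
  have hle : μ (qball d y s) ≤ ENNReal.ofReal Cμ ^ n * μ (qball d x t) :=
    (measure_mono (hX.qball_subset_qball h)).trans (hX.measure_qball_two_pow_mul_le x ht n)
  have hne : ENNReal.ofReal Cμ ^ n * μ (qball d x t) ≠ ∞ :=
    ENNReal.mul_ne_top (ENNReal.pow_ne_top ENNReal.ofReal_ne_top) (hX.ball_ne_top x t).ne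
  simpa [ENNReal.toReal_mul, ENNReal.toReal_pow,
    ENNReal.toReal_ofReal (by linarith [hX.one_le_Cmu] : (0 : ℝ) ≤ Cμ)]
    using ENNReal.toReal_mono hne hle

theorem IsSHT.measure_qball_toReal_le_of_dist_lt (hX : IsSHT d μ A₀ Cμ) {x y : X}
    {R Cb t : ℝ} {n : ℕ} (hR : 0 < R) (hxy : d y x < Cb * R)
    (hn : 2 * A₀ ^ 2 * (Cb + 1) ≤ 2 ^ n) (ht : R ≤ 2 * A₀ * t) :
    (μ (qball d y R)).toReal ≤ Cμ ^ n * (μ (qball d x t)).toReal := by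
  have hA₀ := hX.one_le_A0
  have hCb : 0 < Cb := pos_of_mul_pos_left (lt_of_le_of_lt (hX.nonneg y x) hxy) hR.le
  have ht₀ : 0 < t := by nlinarith
  refine hX.measure_qball_toReal_le_pow ht₀ ?_
  rw [hX.symm x y]
  calc A₀ * (d y x + R) ≤ A₀ * ((Cb + 1) * R) := by nlinarith
    _ ≤ A₀ * ((Cb + 1) * (2 * A₀ * t)) := by gcongr
    _ = 2 * A₀ ^ 2 * (Cb + 1) * t := by ring
    _ ≤ 2 ^ n * t := by gcongr

theorem IsSHT.le_dist_of_mem_qball (hX : IsSHT d μ A₀ Cμ) {x₀ y₀ x y : X} {r : ℝ}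
    (hsep : (2 * A₀ ^ 2 + A₀) * r ≤ d y₀ x₀) (hy : y ∈ qball d y₀ r) (hx : x ∈ qball d x₀ r) :
    r ≤ d y x := by
  have hy : d y₀ y < r := hy
  have hx : d x₀ x < r := hx
  have hA₀ := hX.one_le_A0
  have h₁ := hX.triangle y₀ x₀ y
  have h₂ : d y x₀ ≤ A₀ * (d y x + d x₀ x) := hX.symm x x₀ ▸ hX.triangle y x₀ x
  by_contra! h
  nlinarith [mul_le_mul_of_nonneg_left h₂ (by linarith : 0 ≤ A₀)]

end HomogeneousType

section Kernel

variable {X : Type*} [MeasurableSpace X] {d : X → X → ℝ} {μ : Measure X} {A₀ Cμ : ℝ}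
  {K : X → X → ℂ} {cK : ℝ} {ω : ℝ → ℝ}

theorem IsCZKernel.norm_le_of_le_mul_measure (hK : IsCZKernel d μ A₀ K cK ω)
    (hX : IsSHT d μ A₀ Cμ) {x y : X} {C M : ℝ} (hxy : 0 < d x y) (hM : 0 < M)
    (hMV : M ≤ C * (μ (qball d x (d x y))).toReal) : ‖K x y‖ ≤ max cK 1 * C / M := by
  have hV := hX.measure_qball_toReal_pos x hxy
  calc ‖K x y‖ ≤ cK / (μ (qball d x (d x y))).toReal := hK.size x y (hX.ne_of_dist_pos hxy)
    _ ≤ max cK 1 / (μ (qball d x (d x y))).toReal := by gcongr; exact le_max_left _ _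
    _ ≤ max cK 1 * C / M := by
        rw [div_le_div_iff₀ hV hM, mul_assoc]
        exact mul_le_mul_of_nonneg_left hMV (by positivity)

theorem IsCZKernel.norm_sub_add_norm_sub_le (hK : IsCZKernel d μ A₀ K cK ω)
    (hX : IsSHT d μ A₀ Cμ) {x x' y : X} {θ M : ℝ} (hxy : 0 < d x y) (hθ : d x x' < θ * d x y)
    (hθA : θ ≤ (2 * A₀)⁻¹) (hM : 0 < M) (hMV : M ≤ (μ (qball d x (d x y))).toReal) :
    ‖K x y - K x' y‖ + ‖K y x - K y x'‖ ≤ ω θ / M := by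
  have hA₀ := hX.one_le_A0
  have hθ₀ : 0 ≤ θ := by nlinarith [hX.nonneg x x']
  have hθ₁ : θ ∈ Icc (0 : ℝ) 1 := ⟨hθ₀, hθA.trans (inv_le_one_of_one_le₀ (by linarith))⟩
  have hratio : d x x' / d x y ≤ θ := (div_le_iff₀ hxy).2 hθ.le
  have hreg : d x x' < (2 * A₀)⁻¹ * d x y :=
    hθ.trans_le (mul_le_mul_of_nonneg_right hθA hxy.le)
  calc ‖K x y - K x' y‖ + ‖K y x - K y x'‖
      ≤ ω (d x x' / d x y) / (μ (qball d x (d x y))).toReal :=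
        hK.regularity x x' y (hX.ne_of_dist_pos hxy) hreg
    _ ≤ ω θ / (μ (qball d x (d x y))).toReal := by
        gcongr
        exact hK.omega_mono ⟨div_nonneg (hX.nonneg x x') hxy.le, hratio.trans hθ₁.2⟩ hθ₁ hratio
    _ ≤ ω θ / M := by
        gcongr
        exact hK.omega_nonneg θ hθ₁

theorem IsCZKernel.norm_sub_fst_le_of_mem_qball (hK : IsCZKernel d μ A₀ K cK ω)
    (hX : IsSHT d μ A₀ Cμ) {x₀ y₀ x y : X} {A r C : ℝ} (hA : 2 * A₀ ^ 2 + A₀ ≤ A)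
    (hfar : A * r ≤ d y₀ x₀) (hC : 0 < C)
    (hcomp : ∀ t, A * r ≤ 2 * A₀ * t →
      (μ (qball d y₀ (A * r))).toReal ≤ C * (μ (qball d x₀ t)).toReal)
    (hx : x ∈ qball d x₀ r) (hy : y ∈ qball d y₀ r) :
    ‖K x y - K x₀ y‖ ≤ C * ω (A₀ / (A - A₀)) / (μ (qball d y₀ (A * r))).toReal := by
  have hx : d x₀ x < r := hx
  have hy : d y₀ y < r := hy
  have hA₀ := hX.one_le_A0
  have hr : 0 < r := (hX.nonneg x₀ x).trans_lt hx
  have hm := hX.measure_qball_toReal_pos y₀ (by nlinarith : 0 < A * r)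
  have hfar' : (A - A₀) * r < A₀ * d x₀ y := by
    have := hX.symm y x₀ ▸ hX.triangle y₀ x₀ y
    nlinarith
  have hx₀y : 0 < d x₀ y := by nlinarith
  have hθ : d x₀ x < A₀ / (A - A₀) * d x₀ y := by
    rw [div_mul_eq_mul_div, lt_div_iff₀ (by nlinarith)]
    nlinarith
  have hbound := hK.norm_sub_add_norm_sub_le hX hx₀y hθ (div_sub_le_inv_two_mul (by linarith) hA)
    (div_pos hm hC) ((div_le_iff₀' hC).2 (hcomp _ (by
      nlinarith [mul_le_mul_of_nonneg_right (by nlinarith : A ≤ 2 * (A - A₀)) hr.le])))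
  rw [norm_sub_rev]
  calc ‖K x₀ y - K x y‖ ≤ ω (A₀ / (A - A₀)) / ((μ (qball d y₀ (A * r))).toReal / C) :=
        le_of_add_le_of_nonneg_left hbound (norm_nonneg _)
    _ = C * ω (A₀ / (A - A₀)) / (μ (qball d y₀ (A * r))).toReal := by field_simp

theorem IsCZKernel.norm_sub_snd_le_of_mem_qball (hK : IsCZKernel d μ A₀ K cK ω)
    (hX : IsSHT d μ A₀ Cμ) {x₀ y₀ y : X} {A r : ℝ} (hA : 2 * A₀ ^ 2 + A₀ ≤ A)
    (hfar : A * r ≤ d y₀ x₀) (hy : y ∈ qball d y₀ r) :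
    ‖K x₀ y - K x₀ y₀‖ ≤ ω (A₀ / (A - A₀)) / (μ (qball d y₀ (A * r))).toReal := by
  have hy : d y₀ y < r := hy
  have hA₀ := hX.one_le_A0
  have hr : 0 < r := (hX.nonneg y₀ y).trans_lt hy
  have hm := hX.measure_qball_toReal_pos y₀ (by nlinarith : 0 < A * r)
  have hθ : d y₀ y < A₀ / (A - A₀) * d y₀ x₀ := by
    rw [div_mul_eq_mul_div, lt_div_iff₀ (by nlinarith)]
    nlinarith [mul_lt_mul_of_pos_right hy (by nlinarith : 0 < A - A₀), hX.nonneg y₀ x₀]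
  have hmV : (μ (qball d y₀ (A * r))).toReal ≤ (μ (qball d y₀ (d y₀ x₀))).toReal :=
    ENNReal.toReal_mono (hX.ball_ne_top _ _).ne
      (measure_mono fun z (hz : d y₀ z < A * r) => hz.trans_le hfar)
  have hbound := hK.norm_sub_add_norm_sub_le hX (by nlinarith) hθ
    (div_sub_le_inv_two_mul (by linarith) hA) hm hmV
  rw [norm_sub_rev]
  exact le_of_add_le_of_nonneg_right hbound (norm_nonneg _)

theorem IsCZKernel.norm_sub_le_of_mem_qball (hK : IsCZKernel d μ A₀ K cK ω)
    (hX : IsSHT d μ A₀ Cμ) {x₀ y₀ x y : X} {A r C : ℝ} (hA : 2 * A₀ ^ 2 + A₀ ≤ A)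
    (hfar : A * r ≤ d y₀ x₀) (hC : 0 < C)
    (hcomp : ∀ t, A * r ≤ 2 * A₀ * t →
      (μ (qball d y₀ (A * r))).toReal ≤ C * (μ (qball d x₀ t)).toReal)
    (hx : x ∈ qball d x₀ r) (hy : y ∈ qball d y₀ r) :
    ‖K x y - K x₀ y₀‖ ≤ (C + 1) * ω (A₀ / (A - A₀)) / (μ (qball d y₀ (A * r))).toReal :=
  calc ‖K x y - K x₀ y₀‖ ≤ ‖K x y - K x₀ y‖ + ‖K x₀ y - K x₀ y₀‖ :=
        norm_sub_le_norm_sub_add_norm_sub _ _ _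
    _ ≤ C * ω (A₀ / (A - A₀)) / (μ (qball d y₀ (A * r))).toReal
          + ω (A₀ / (A - A₀)) / (μ (qball d y₀ (A * r))).toReal :=
        add_le_add (hK.norm_sub_fst_le_of_mem_qball hX hA hfar hC hcomp hx hy)
          (hK.norm_sub_snd_le_of_mem_qball hX hA hfar hy)
    _ = (C + 1) * ω (A₀ / (A - A₀)) / (μ (qball d y₀ (A * r))).toReal := by ring

end Kernel

end SHT

open SHT

theorem stmt12_general {X : Type*} [MeasurableSpace X]
    (d : X → X → ℝ) (μ : MeasureTheory.Measure X) (A₀ Cμ : ℝ)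
    (hX : IsSHT d μ A₀ Cμ)
    (K : X → X → ℂ) (cK : ℝ) (ω : ℝ → ℝ)
    (hK : IsCZKernel d μ A₀ K cK ω)
    (c₀ Cb : ℝ) (hc₀ : 0 < c₀)
    (hnd : NonDegDual d μ K c₀ Cb) :
    ∃ (ε : ℝ → ℝ) (c₁ c₂ c₃ : ℝ), 0 < c₁ ∧ 0 < c₂ ∧ 0 < c₃ ∧
      Filter.Tendsto ε Filter.atTop (nhds 0) ∧
      ∀ A : ℝ, 2 * A₀ ^ 2 + A₀ ≤ A → 0 < ε A ∧
        ∀ (y₀ : X) (r : ℝ), 0 < r → ∃ x₀ : X,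
          (∀ y ∈ qball d y₀ r, ∀ x ∈ qball d x₀ r, r ≤ d y x) ∧
          A * r ≤ d x₀ y₀ ∧ d x₀ y₀ < Cb * A * r ∧
          c₁ / (μ (qball d y₀ (A * r))).toReal ≤ ‖K x₀ y₀‖ ∧
          ‖K x₀ y₀‖ ≤ c₂ / (μ (qball d y₀ (A * r))).toReal ∧
          (∀ x ∈ qball d x₀ r,
            ∫⁻ y in qball d y₀ r, ENNReal.ofReal (‖K x y - K x₀ y₀‖) ∂μ
              ≤ ENNReal.ofReal (c₃ * ε A) * μ (qball d y₀ r) / μ (qball d y₀ (A * r))) ∧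
          (∀ y ∈ qball d y₀ r,
            ∫⁻ x in qball d x₀ r, ENNReal.ofReal (‖K x y - K x₀ y₀‖) ∂μ
              ≤ ENNReal.ofReal (c₃ * ε A) * μ (qball d x₀ r) / μ (qball d y₀ (A * r))) := by
  have hA₀ := hX.one_le_A0
  obtain ⟨N, hN⟩ := pow_unbounded_of_one_lt (2 * A₀ ^ 2 * (Cb + 1)) one_lt_two
  have hCμ : (0 : ℝ) < Cμ ^ N := pow_pos (by linarith [hX.one_le_Cmu]) N
  refine ⟨fun A => ω (A₀ / (A - A₀)) + A⁻¹, 1 / c₀, max cK 1 * Cμ ^ N, Cμ ^ N + 1,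
    by positivity, by positivity, by positivity, ?_, fun A hA => ?_⟩
  · simpa using (tendsto_comp_div_sub_atTop (by linarith) (hK.omega_cont 0 ⟨le_rfl, zero_le_one⟩)
      hK.omega_zero).add tendsto_inv_atTop_zero
  have hApos : 0 < A := by nlinarith
  have hωA : 0 ≤ ω (A₀ / (A - A₀)) := hK.omega_nonneg _
    ⟨div_nonneg (by linarith) (by nlinarith),
      (div_sub_le_inv_two_mul (by linarith) hA).trans (inv_le_one_of_one_le₀ (by linarith))⟩
  refine ⟨by positivity, fun y₀ r hr => ?_⟩
  obtain ⟨x₀, ⟨(hnear : d y₀ x₀ < Cb * (A * r)), hfar⟩, hKx₀⟩ := hnd y₀ (A * r) (by positivity)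
  have hfar : A * r ≤ d y₀ x₀ := not_lt.1 hfar
  have hm := hX.measure_qball_toReal_pos y₀ (by positivity : 0 < A * r)
  have hcomp : ∀ t, A * r ≤ 2 * A₀ * t →
      (μ (qball d y₀ (A * r))).toReal ≤ Cμ ^ N * (μ (qball d x₀ t)).toReal := fun t ht =>
    hX.measure_qball_toReal_le_of_dist_lt (by positivity) hnear hN.le ht
  have hpt : ∀ x ∈ qball d x₀ r, ∀ y ∈ qball d y₀ r, ‖K x y - K x₀ y₀‖ ≤
      (Cμ ^ N + 1) * (ω (A₀ / (A - A₀)) + A⁻¹) / (μ (qball d y₀ (A * r))).toReal :=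
    fun x hx y hy => (hK.norm_sub_le_of_mem_qball hX hA hfar hCμ hcomp hx hy).trans
      (by gcongr; linarith [inv_pos.2 (by positivity : 0 < A)])
  have hsep := (mul_le_mul_of_nonneg_right hA hr.le).trans hfar
  refine ⟨x₀, fun y hy x hx => hX.le_dist_of_mem_qball hsep hy hx, by rwa [hX.symm],
    by rwa [hX.symm, mul_assoc], by rwa [div_div], ?_, fun x hx => ?_, fun y hy => ?_⟩
  · rw [hX.symm] at hfar
    have hd : 0 < d x₀ y₀ := (by positivity : 0 < A * r).trans_le hfar
    exact hK.norm_le_of_le_mul_measure hX hd hm (hcomp _ (by nlinarith))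
  · exact setLIntegral_ofReal_le_mul_div_measure (hX.ball_pos _ _ (by positivity)).ne'
      (hX.ball_ne_top _ _).ne fun y hy => hpt x hx y hy
  · exact setLIntegral_ofReal_le_mul_div_measure (hX.ball_pos _ _ (by positivity)).ne'
      (hX.ball_ne_top _ _).ne fun x hx => hpt x hx y hy

/-- Proposition 4.6 of the paper: properties of a kernel satisfying
the dual non-degeneracy condition. -/
theorem stmt12 {X : Type*} [MeasurableSpace X]
    (d : X → X → ℝ) (μ : MeasureTheory.Measure X) (A₀ Cμ : ℝ)
    (hX : IsSHT d μ A₀ Cμ)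
    (K : X → X → ℂ) (cK : ℝ) (ω : ℝ → ℝ)
    (hK : IsCZKernel d μ A₀ K cK ω)
    (c₀ Cb : ℝ) (hc₀ : 0 < c₀) (hCb : 0 < Cb)
    (hnd : NonDegDual d μ K c₀ Cb) :
    ∃ (ε : ℝ → ℝ) (c₁ c₂ c₃ : ℝ), 0 < c₁ ∧ 0 < c₂ ∧ 0 < c₃ ∧
      Filter.Tendsto ε Filter.atTop (nhds 0) ∧
      ∀ A : ℝ, 2 * A₀ ^ 2 + A₀ ≤ A → 0 < ε A ∧
        ∀ (y₀ : X) (r : ℝ), 0 < r → ∃ x₀ : X,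
          (∀ y ∈ qball d y₀ r, ∀ x ∈ qball d x₀ r, r ≤ d y x) ∧
          A * r ≤ d x₀ y₀ ∧ d x₀ y₀ < Cb * A * r ∧
          c₁ / (μ (qball d y₀ (A * r))).toReal ≤ ‖K x₀ y₀‖ ∧
          ‖K x₀ y₀‖ ≤ c₂ / (μ (qball d y₀ (A * r))).toReal ∧
          (∀ x ∈ qball d x₀ r,
            ∫⁻ y in qball d y₀ r, ENNReal.ofReal (‖K x y - K x₀ y₀‖) ∂μ
              ≤ ENNReal.ofReal (c₃ * ε A) * μ (qball d y₀ r) / μ (qball d y₀ (A * r))) ∧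
          (∀ y ∈ qball d y₀ r,
            ∫⁻ x in qball d x₀ r, ENNReal.ofReal (‖K x y - K x₀ y₀‖) ∂μ
              ≤ ENNReal.ofReal (c₃ * ε A) * μ (qball d x₀ r) / μ (qball d y₀ (A * r))) :=
  stmt12_general d μ A₀ Cμ hX K cK ω hK c₀ Cb hc₀ hnd
end
end

section
/- Let (X,d,μ) be a space of homogeneous type and let K be an ω-Calderón–Zygmund kernel on X. If the sextuple (K, ξ, A, ε, B, B̃) is admissible, then (K*, ξ*, A, ε, B̃, B) is admissible, where ξ* := ξ C_μ (A₀(1+ξ))^Q and K*(x,y) := K(y,x). -/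
open MeasureTheory Filter Set
open scoped ENNReal NNReal

noncomputable section

/-!
Transposing the kernel and exchanging the two balls preserves every condition of admissibility
except the normalisation by `μ(B(y₀, A r))`, which has to become `μ(B(x₀, A r))`. Since
`d(x₀, y₀) ≤ ξ A r`, each of these balls lies in the other one dilated by `A₀ (1 + ξ)`, and
iterating the doubling condition `⌈log₂ (A₀ (1 + ξ))⌉` times bounds the ratio of their measures
by `Cμ (A₀ (1 + ξ)) ^ Q`.
-/

lemma ENNReal.div_le_mul_div_of_le_mul {a b c x : ℝ≥0∞} (hc₀ : c ≠ 0) (hc : c ≠ ⊤)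
    (h : x ≤ c * b) : a / b ≤ c * a / x := by
  rw [← ENNReal.mul_div_mul_left a b hc₀ hc]
  exact ENNReal.div_le_div_left h _

lemma Real.rpow_logb_comm {x y : ℝ} (b : ℝ) (hx : 0 < x) (hy : 0 < y) :
    x ^ Real.logb b y = y ^ Real.logb b x := by
  rw [Real.rpow_def_of_pos hx, Real.rpow_def_of_pos hy, Real.logb, Real.logb]
  ring_nf

namespace SHT

variable {X : Type*} [MeasurableSpace X] {d : X → X → ℝ} {μ : Measure X} {A₀ Cμ : ℝ}

namespace IsSHT

lemma measure_qball_two_pow_mul_le_s15 (hX : IsSHT d μ A₀ Cμ) (x : X) {s : ℝ} (hs : 0 < s)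
    (n : ℕ) :
    μ (qball d x (2 ^ n * s)) ≤ ENNReal.ofReal Cμ ^ n * μ (qball d x s) := by
  induction n with
  | zero => simp
  | succ n ih =>
    calc μ (qball d x (2 ^ (n + 1) * s)) = μ (qball d x (2 * (2 ^ n * s))) := by ring_nf
      _ ≤ ENNReal.ofReal Cμ * μ (qball d x (2 ^ n * s)) := hX.doubling x _ (by positivity)
      _ ≤ ENNReal.ofReal Cμ * (ENNReal.ofReal Cμ ^ n * μ (qball d x s)) := by gcongr
      _ = ENNReal.ofReal Cμ ^ (n + 1) * μ (qball d x s) := by ring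

lemma measure_qball_mul_le (hX : IsSHT d μ A₀ Cμ) (x : X) {s t : ℝ} (hs : 0 < s)
    (ht : 1 ≤ t) :
    μ (qball d x (t * s)) ≤ ENNReal.ofReal (Cμ * t ^ Real.logb 2 Cμ) * μ (qball d x s) := by
  have hCμ : 1 ≤ Cμ := hX.one_le_Cmu
  set n := ⌈Real.logb 2 t⌉₊
  have ht_le : t ≤ 2 ^ n := by
    calc t = 2 ^ Real.logb 2 t := (Real.rpow_logb two_pos (by norm_num) (by linarith)).symm
      _ ≤ 2 ^ (n : ℝ) := Real.rpow_le_rpow_of_exponent_le one_le_two (Nat.le_ceil _)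
      _ = 2 ^ n := Real.rpow_natCast 2 n
  have hpow : Cμ ^ n ≤ Cμ * t ^ Real.logb 2 Cμ := by
    have hn : (n : ℝ) ≤ Real.logb 2 t + 1 :=
      (Nat.ceil_lt_add_one (Real.logb_nonneg one_lt_two ht)).le
    calc Cμ ^ n = Cμ ^ (n : ℝ) := (Real.rpow_natCast Cμ n).symm
      _ ≤ Cμ ^ (Real.logb 2 t + 1) := Real.rpow_le_rpow_of_exponent_le hCμ hn
      _ = Cμ * t ^ Real.logb 2 Cμ := by
        rw [Real.rpow_add_one (by linarith), Real.rpow_logb_comm 2 (by linarith) (by linarith),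
          mul_comm]
  calc μ (qball d x (t * s)) ≤ μ (qball d x (2 ^ n * s)) :=
        measure_mono fun z (hz : d x z < t * s) => show d x z < 2 ^ n * s by nlinarith
    _ ≤ ENNReal.ofReal Cμ ^ n * μ (qball d x s) := hX.measure_qball_two_pow_mul_le_s15 x hs n
    _ ≤ ENNReal.ofReal (Cμ * t ^ Real.logb 2 Cμ) * μ (qball d x s) := by
      rw [← ENNReal.ofReal_pow (by linarith)]
      gcongr

lemma qball_subset_qball_of_dist_le (hX : IsSHT d μ A₀ Cμ) {a b : X} {ξ s : ℝ}
    (h : d a b ≤ ξ * s) :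
    qball d b s ⊆ qball d a (A₀ * (1 + ξ) * s) := by
  intro z (hz : d b z < s)
  have hA₀ : 0 < A₀ := by linarith [hX.one_le_A0]
  calc d a z ≤ A₀ * (d a b + d b z) := hX.triangle a z b
    _ < A₀ * (1 + ξ) * s := by nlinarith

lemma measure_qball_le_of_dist_le (hX : IsSHT d μ A₀ Cμ) {a b : X} {ξ s : ℝ} (hξ : 0 ≤ ξ)
    (hs : 0 < s) (h : d a b ≤ ξ * s) :
    μ (qball d b s)
      ≤ ENNReal.ofReal (Cμ * (A₀ * (1 + ξ)) ^ Real.logb 2 Cμ) * μ (qball d a s) :=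
  (measure_mono (hX.qball_subset_qball_of_dist_le h)).trans
    (hX.measure_qball_mul_le a hs (by nlinarith [hX.one_le_A0]))

end IsSHT

lemma Admissible.transpose {K : X → X → ℂ} {ξ A ε r c : ℝ} {y₀ x₀ : X}
    (hX : IsSHT d μ A₀ Cμ) (hadm : Admissible d μ A₀ K ξ A ε r y₀ x₀) (hc : 1 ≤ c)
    (hxy : μ (qball d x₀ (A * r)) ≤ ENNReal.ofReal c * μ (qball d y₀ (A * r)))
    (hyx : μ (qball d y₀ (A * r)) ≤ ENNReal.ofReal c * μ (qball d x₀ (A * r))) :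
    Admissible d μ A₀ (fun x y => K y x) (ξ * c) A ε r x₀ y₀ := by
  have hξ := hadm.xi_ge_one
  have hAr : 0 < A * r := by nlinarith [hadm.A_ge, hadm.r_pos, hX.one_le_A0]
  set Mx := μ (qball d x₀ (A * r))
  set My := μ (qball d y₀ (A * r))
  have hMx : 0 < Mx.toReal :=
    ENNReal.toReal_pos (hX.ball_pos x₀ _ hAr).ne' (hX.ball_ne_top x₀ _).ne
  have hMy : 0 < My.toReal :=
    ENNReal.toReal_pos (hX.ball_pos y₀ _ hAr).ne' (hX.ball_ne_top y₀ _).ne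
  have toReal_le {M N : ℝ≥0∞} (hN : N ≠ ⊤) (h : M ≤ ENNReal.ofReal c * N) :
      M.toReal ≤ c * N.toReal :=
    ENNReal.toReal_le_of_le_ofReal (by positivity)
      (h.trans_eq (by rw [ENNReal.ofReal_mul (by linarith), ENNReal.ofReal_toReal hN]))
  have hxyR := toReal_le (hX.ball_ne_top y₀ _).ne hxy
  have hyxR := toReal_le (hX.ball_ne_top x₀ _).ne hyx
  have hc₀ : ENNReal.ofReal c ≠ 0 := by simpa using zero_lt_one.trans_le hc
  have hε : ENNReal.ofReal (ξ * c * ε) = ENNReal.ofReal c * ENNReal.ofReal (ξ * ε) := by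
    rw [← ENNReal.ofReal_mul (by linarith)]; ring_nf
  refine ⟨hadm.r_pos, by nlinarith, hadm.A_ge, hadm.eps_pos,
    fun y hy x hx => (hadm.sep x hx y hy).trans_eq (hX.symm x y), ?_, ?_, ?_, ?_, ?_, ?_⟩
  · exact hadm.dist_lb.trans_eq (hX.symm x₀ y₀)
  · rw [hX.symm]
    nlinarith [hadm.dist_ub, mul_nonneg (mul_nonneg (by linarith : 0 ≤ ξ) hAr.le)
      (by linarith : 0 ≤ c - 1)]
  · calc ‖K x₀ y₀‖ ≤ ξ / My.toReal := hadm.K_ub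
      _ ≤ ξ * c / Mx.toReal := by
        rw [div_le_div_iff₀ hMy hMx, mul_assoc]
        exact mul_le_mul_of_nonneg_left hxyR (by linarith)
  · calc 1 / Mx.toReal ≤ c * (1 / My.toReal) := by
          rw [mul_one_div, div_le_div_iff₀ hMx hMy]; linarith
      _ ≤ c * (ξ * ‖K x₀ y₀‖) := mul_le_mul_of_nonneg_left hadm.K_lb (by linarith)
      _ = ξ * c * ‖K x₀ y₀‖ := by ring
  · intro x hx
    rw [hε, mul_assoc]
    exact (hadm.int_x x hx).trans
      (ENNReal.div_le_mul_div_of_le_mul hc₀ ENNReal.ofReal_ne_top hxy)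
  · intro y hy
    rw [hε, mul_assoc]
    exact (hadm.int_y y hy).trans
      (ENNReal.div_le_mul_div_of_le_mul hc₀ ENNReal.ofReal_ne_top hxy)

end SHT

open SHT

theorem stmt15_general {X : Type*} [MeasurableSpace X]
    (d : X → X → ℝ) (μ : MeasureTheory.Measure X) (A₀ Cμ : ℝ)
    (hX : IsSHT d μ A₀ Cμ)
    (K : X → X → ℂ)
    (ξ A ε r : ℝ) (y₀ x₀ : X)
    (hadm : Admissible d μ A₀ K ξ A ε r y₀ x₀) :
    Admissible d μ A₀ (fun x y => K y x)
      (ξ * Cμ * (A₀ * (1 + ξ)) ^ (Real.logb 2 Cμ)) A ε r x₀ y₀ := by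
  have hξ : 0 ≤ ξ := zero_le_one.trans hadm.xi_ge_one
  have hAr : 0 < A * r := by nlinarith [hadm.A_ge, hadm.r_pos, hX.one_le_A0]
  have hdist : d x₀ y₀ ≤ ξ * (A * r) := hadm.dist_ub.trans_eq (mul_assoc ξ A r)
  have hc : 1 ≤ Cμ * (A₀ * (1 + ξ)) ^ Real.logb 2 Cμ :=
    one_le_mul_of_one_le_of_one_le hX.one_le_Cmu
      (Real.one_le_rpow (by nlinarith [hX.one_le_A0])
        (Real.logb_nonneg one_lt_two hX.one_le_Cmu))
  rw [mul_assoc ξ]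
  exact hadm.transpose hX hc
    (hX.measure_qball_le_of_dist_le hξ hAr ((hX.symm y₀ x₀).trans_le hdist))
    (hX.measure_qball_le_of_dist_le hξ hAr hdist)

/-- admissibility of `(K,ξ,A,ε,B,B̃)` implies admissibility of
`(K*, ξ*, A, ε, B̃, B)` with `ξ* = ξ Cμ (A₀(1+ξ))^Q`. -/
theorem stmt15 {X : Type*} [MeasurableSpace X]
    (d : X → X → ℝ) (μ : MeasureTheory.Measure X) (A₀ Cμ : ℝ)
    (hX : IsSHT d μ A₀ Cμ)
    (K : X → X → ℂ) (cK : ℝ) (ω : ℝ → ℝ)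
    (hK : IsCZKernel d μ A₀ K cK ω)
    (ξ A ε r : ℝ) (y₀ x₀ : X)
    (hadm : Admissible d μ A₀ K ξ A ε r y₀ x₀) :
    Admissible d μ A₀ (fun x y => K y x)
      (ξ * Cμ * (A₀ * (1 + ξ)) ^ (Real.logb 2 Cμ)) A ε r x₀ y₀ :=
  stmt15_general d μ A₀ Cμ hX K ξ A ε r y₀ x₀ hadm
end
end
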